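/- Let P be a nonzero subpartition of a finite set X containing a block B with |B| ≥ 3. Then P has no canonical join representation: the set of irredundant join representations of P by join-irreducible elements, preordered by join-refinement, has no unique minimum. -/

import Mathlib

/-- A subpartition of `X`: a collection of nonempty pairwise disjoint blocks. -/
structure Subpartition (X : Type*) where
  blocks : Set (Set X)
  nonempty_blocks : ∀ B ∈ blocks, B.Nonempty
  pairwise_disjoint : ∀ B ∈ blocks, ∀ C ∈ blocks, B ≠ C → Disjoint B C

/-- `P` refines `Q`: every block of `P` is contained in some block of `Q`. -/
def Subpartition.Refines {X : Type*} (P Q : Subpartition X) : Prop :=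
  ∀ B ∈ P.blocks, ∃ C ∈ Q.blocks, B ⊆ C

/-- The empty subpartition: the zero element of `SubPart(X)`. -/
def Subpartition.empty (X : Type*) : Subpartition X :=
  ⟨∅, fun _ h => absurd h (Set.notMem_empty _), fun _ h => absurd h (Set.notMem_empty _)⟩

/-- `J` is the join (least upper bound) of `P` and `Q` with respect to refinement. -/
def Subpartition.IsJoin {X : Type*} (P Q J : Subpartition X) : Prop :=
  P.Refines J ∧ Q.Refines J ∧
    ∀ S : Subpartition X, P.Refines S → Q.Refines S → J.Refines S

/-- `P` is join-irreducible. -/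
def Subpartition.JoinIrred {X : Type*} (P : Subpartition X) : Prop :=
  P ≠ Subpartition.empty X ∧
    ∀ Q R : Subpartition X, Subpartition.IsJoin Q R P → P = Q ∨ P = R

/-- `P` is the join (least upper bound) of the set `A` with respect to refinement. -/
def Subpartition.IsSetJoin {X : Type*} (A : Set (Subpartition X)) (P : Subpartition X) :
    Prop :=
  (∀ a ∈ A, a.Refines P) ∧ ∀ S : Subpartition X, (∀ a ∈ A, a.Refines S) → P.Refines S

/-- `A` is an irredundant join representation of `P` by join-irreducible elements:
the elements of `A` are join-irreducible, `⋁A = P`, and the join of every proper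
subset of `A` is strictly smaller than `P`. -/
def Subpartition.IrredundantRep {X : Type*} (A : Set (Subpartition X))
    (P : Subpartition X) : Prop :=
  (∀ a ∈ A, a.JoinIrred) ∧ Subpartition.IsSetJoin A P ∧
    ∀ A' : Set (Subpartition X), A' ⊂ A →
      ∀ J : Subpartition X, Subpartition.IsSetJoin A' J → J ≠ P

/-- `A` join-refines `B`: every element of `A` lies below some element of `B`. -/
def Subpartition.JoinRefines {X : Type*} (A B : Set (Subpartition X)) : Prop :=
  ∀ a ∈ A, ∃ b ∈ B, a.Refines b

/-!
Centre the star representation of `P` at two different points `x` and `y` of `B`. Both are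
irredundant representations by atoms `{c, w}`, so a canonical representation `A` would
join-refine both. A block of an element of `A` that contains the third point `z` then lies in
`{x, w} ∩ {y, w'}`, hence is `{z}`; so every element of `A` refines `P` with `z` split off from
`B`, and so does their join `P`, which is absurd.
-/

theorem Set.eq_singleton_of_mem_of_ssubset_pair {X : Type*} {D : Set X} {p w v : X}
    (hv : v ∈ D) (hD : D ⊂ {p, w}) : D = {v} := by
  refine Set.eq_singleton_iff_unique_mem.mpr ⟨hv, fun u hu => ?_⟩
  by_contra huv
  refine hD.not_subset (Set.pair_subset ?_ ?_) <;>
    rcases hD.subset hu with rfl | rfl <;> rcases hD.subset hv with rfl | rfl <;> simp_all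

namespace Subpartition

variable {X : Type*}

theorem ext {P Q : Subpartition X} (h : P.blocks = Q.blocks) : P = Q := by
  cases P; cases Q; congr

theorem eq_of_mem_of_mem {P : Subpartition X} {C D : Set X} (hC : C ∈ P.blocks)
    (hD : D ∈ P.blocks) {v : X} (hvC : v ∈ C) (hvD : v ∈ D) : C = D :=
  by_contra fun hne => Set.disjoint_left.mp (P.pairwise_disjoint C hC D hD hne) hvC hvD

theorem eq_of_subset {P : Subpartition X} {C D : Set X} (hC : C ∈ P.blocks)
    (hD : D ∈ P.blocks) (h : C ⊆ D) : C = D :=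
  let ⟨_, hv⟩ := P.nonempty_blocks C hC
  eq_of_mem_of_mem hC hD hv (h hv)

theorem joinIrred_of_forall_refines {P L : Subpartition X} (hP : P ≠ Subpartition.empty X)
    (hPL : ¬ P.Refines L) (h : ∀ T : Subpartition X, T.Refines P → T ≠ P → T.Refines L) :
    P.JoinIrred := by
  refine ⟨hP, fun Q R ⟨hQ, hR, hlub⟩ => ?_⟩
  by_contra! hne
  exact hPL (hlub L (h Q hQ hne.1.symm) (h R hR hne.2.symm))

theorem irredundant_of_forall_exists_refines {A : Set (Subpartition X)} {P : Subpartition X}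
    (h : ∀ e ∈ A, ∃ S : Subpartition X, (∀ a ∈ A, a ≠ e → a.Refines S) ∧ ¬ P.Refines S) :
    ∀ A' ⊂ A, ∀ J : Subpartition X, IsSetJoin A' J → J ≠ P := by
  rintro A' hA' J hJ rfl
  obtain ⟨e, he, heA'⟩ := Set.exists_of_ssubset hA'
  obtain ⟨S, hS, hJS⟩ := h e he
  exact hJS (hJ.2 S fun a ha => hS a (hA'.1 ha) (ne_of_mem_of_not_mem ha heA'))

def pair (p w : X) : Subpartition X where
  blocks := {{p, w}}
  nonempty_blocks := by rintro B rfl; exact Set.insert_nonempty p {w}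
  pairwise_disjoint := by rintro B rfl C rfl h; exact absurd rfl h

theorem pair_refines_iff {p w : X} {S : Subpartition X} :
    (pair p w).Refines S ↔ ∃ D ∈ S.blocks, {p, w} ⊆ D := by
  simp [Refines, pair]

theorem pair_ne_empty (p w : X) : pair p w ≠ Subpartition.empty X := fun h =>
  Set.notMem_empty ({p, w} : Set X) (h ▸ rfl : ({p, w} : Set X) ∈ (Subpartition.empty X).blocks)

theorem ssubset_of_refines_pair {T : Subpartition X} {p w : X} (hT : T.Refines (pair p w))
    (hne : T ≠ pair p w) {D : Set X} (hD : D ∈ T.blocks) : D ⊂ {p, w} := by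
  have hsub : ∀ E ∈ T.blocks, E ⊆ {p, w} := fun E hE => by
    obtain ⟨_, rfl, hE⟩ := hT E hE
    exact hE
  refine (hsub D hD).ssubset_of_ne fun hDpw => hne (ext ?_)
  refine Set.eq_singleton_iff_unique_mem.mpr ⟨hDpw ▸ hD, fun E hE => ?_⟩
  exact eq_of_subset hE (hDpw ▸ hD) (hDpw ▸ hsub E hE)

/-- Proper subsets of a pair are singletons, so they form a subpartition; every subpartition
strictly below `pair p w` refines it. -/
def properParts (p w : X) : Subpartition X where
  blocks := {D | D.Nonempty ∧ D ⊂ {p, w}}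
  nonempty_blocks _ hD := hD.1
  pairwise_disjoint := by
    rintro D ⟨-, hD⟩ E ⟨-, hE⟩ hne
    refine Set.disjoint_left.mpr fun v hvD hvE => hne ?_
    rw [Set.eq_singleton_of_mem_of_ssubset_pair hvD hD,
      Set.eq_singleton_of_mem_of_ssubset_pair hvE hE]

theorem joinIrred_pair (p w : X) : (pair p w).JoinIrred := by
  refine joinIrred_of_forall_refines (L := properParts p w) (pair_ne_empty p w) ?_ ?_
  · rw [pair_refines_iff]
    rintro ⟨D, ⟨-, hD⟩, hpw⟩
    exact hD.not_subset hpw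
  · intro T hT hne D hD
    exact ⟨D, ⟨T.nonempty_blocks D hD, ssubset_of_refines_pair hT hne hD⟩, subset_rfl⟩

def split (P : Subpartition X) {C : Set X} (hC : C ∈ P.blocks) {w : X} (hw : w ∈ C)
    (hne : (C \ {w}).Nonempty) : Subpartition X where
  blocks := insert (C \ {w}) (insert {w} (P.blocks \ {C}))
  nonempty_blocks := by
    rintro D (rfl | rfl | ⟨hD, -⟩)
    exacts [hne, Set.singleton_nonempty w, P.nonempty_blocks D hD]
  pairwise_disjoint := by
    have hrest : ∀ D ∈ P.blocks \ {C}, Disjoint C D := fun D ⟨hD, hDC⟩ =>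
      P.pairwise_disjoint C hC D hD (Ne.symm hDC)
    rintro D (rfl | rfl | hD) E (rfl | rfl | hE) hDE
    all_goals first
      | exact absurd rfl hDE
      | exact Set.disjoint_sdiff_left
      | exact Set.disjoint_sdiff_right
      | exact (hrest _ hE).mono_left Set.sdiff_subset
      | exact ((hrest _ hD).mono_left Set.sdiff_subset).symm
      | exact (hrest _ hE).mono_left (Set.singleton_subset_iff.mpr hw)
      | exact ((hrest _ hD).mono_left (Set.singleton_subset_iff.mpr hw)).symm
      | exact P.pairwise_disjoint D hD.1 E hE.1 hDE

theorem mem_split_of_ne {P : Subpartition X} {C : Set X} (hC : C ∈ P.blocks) {w : X}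
    (hw : w ∈ C) (hne : (C \ {w}).Nonempty) {D : Set X} (hD : D ∈ P.blocks) (hDC : D ≠ C) :
    D ∈ (P.split hC hw hne).blocks :=
  Set.mem_insert_of_mem _ (Set.mem_insert_of_mem _ ⟨hD, hDC⟩)

theorem not_refines_split (P : Subpartition X) {C : Set X} (hC : C ∈ P.blocks) {w : X}
    (hw : w ∈ C) (hne : (C \ {w}).Nonempty) : ¬ P.Refines (P.split hC hw hne) := by
  intro h
  obtain ⟨D, hD, hCD⟩ := h C hC
  rcases hD with rfl | rfl | ⟨hD, hDC⟩
  · exact (hCD hw).2 rfl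
  · obtain ⟨v, hvC, hvw⟩ := hne
    exact hvw (hCD hvC)
  · exact hDC (eq_of_subset hC hD hCD).symm

def erase (P : Subpartition X) (C : Set X) : Subpartition X where
  blocks := P.blocks \ {C}
  nonempty_blocks D hD := P.nonempty_blocks D hD.1
  pairwise_disjoint D hD E hE := P.pairwise_disjoint D hD.1 E hE.1

theorem not_refines_erase {P : Subpartition X} {C : Set X} (hC : C ∈ P.blocks) :
    ¬ P.Refines (P.erase C) := fun h =>
  let ⟨_, ⟨hD, hDC⟩, hCD⟩ := h C hC
  hDC (eq_of_subset hC hD hCD).symm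

/-- The pairs `{f C, w}` joining the centre `f C` of each block `C` to its other points, and `{f C}`
for a singleton block. -/
def star (P : Subpartition X) (f : Set X → X) : Set (Subpartition X) :=
  {a | ∃ C ∈ P.blocks, ∃ w ∈ C, (w ≠ f C ∨ C = {f C}) ∧ a = pair (f C) w}

section star

variable {P : Subpartition X} {f : Set X → X} (hf : ∀ C ∈ P.blocks, f C ∈ C)
include hf

theorem exists_star_edge_mem {C : Set X} (hC : C ∈ P.blocks) {v : X} (hv : v ∈ C) :
    ∃ w ∈ C, (w ≠ f C ∨ C = {f C}) ∧ v ∈ ({f C, w} : Set X) := by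
  by_cases hvf : v = f C
  · by_cases hCf : C = {f C}
    · exact ⟨f C, hf C hC, Or.inr hCf, Or.inl hvf⟩
    · obtain ⟨w, hw, hwf⟩ : ∃ w ∈ C, w ≠ f C := by
        by_contra! h
        exact hCf (Set.eq_singleton_iff_unique_mem.mpr ⟨hf C hC, h⟩)
      exact ⟨w, hw, Or.inl hwf, Or.inl hvf⟩
  · exact ⟨v, hv, Or.inl hvf, Or.inr rfl⟩

theorem isSetJoin_star : IsSetJoin (P.star f) P := by
  refine ⟨?_, fun S hS C hC => ?_⟩
  · rintro _ ⟨C, hC, w, hw, -, rfl⟩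
    exact pair_refines_iff.mpr ⟨C, hC, Set.pair_subset (hf C hC) hw⟩
  · have hblock : ∀ v ∈ C, ∃ D ∈ S.blocks, f C ∈ D ∧ v ∈ D := fun v hv => by
      obtain ⟨w, hw, hwC, hvw⟩ := exists_star_edge_mem hf hC hv
      obtain ⟨D, hD, hfwD⟩ := pair_refines_iff.mp (hS _ ⟨C, hC, w, hw, hwC, rfl⟩)
      exact ⟨D, hD, hfwD (Or.inl rfl), hfwD hvw⟩
    obtain ⟨D, hD, hfD, -⟩ := hblock (f C) (hf C hC)
    refine ⟨D, hD, fun v hv => ?_⟩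
    obtain ⟨D', hD', hfD', hvD'⟩ := hblock v hv
    exact eq_of_mem_of_mem hD hD' hfD hfD' ▸ hvD'

theorem irredundantRep_star : IrredundantRep (P.star f) P := by
  refine ⟨?_, isSetJoin_star hf, irredundant_of_forall_exists_refines ?_⟩
  · rintro _ ⟨C, -, w, -, -, rfl⟩
    exact joinIrred_pair _ _
  rintro _ ⟨C, hC, w, hw, hwC | hCf, rfl⟩
  · refine ⟨P.split hC hw ⟨f C, hf C hC, Ne.symm hwC⟩, ?_, P.not_refines_split hC hw _⟩
    rintro _ ⟨C', hC', w', hw', -, rfl⟩ hne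
    rw [pair_refines_iff]
    by_cases hCC' : C' = C
    · subst hCC'
      have hww' : w' ≠ w := fun h => hne (h ▸ rfl)
      exact ⟨_, Set.mem_insert _ _, Set.pair_subset ⟨hf C' hC', Ne.symm hwC⟩ ⟨hw', hww'⟩⟩
    · exact ⟨C', mem_split_of_ne hC hw _ hC' hCC', Set.pair_subset (hf C' hC') hw'⟩
  · refine ⟨P.erase C, ?_, not_refines_erase hC⟩
    rintro _ ⟨C', hC', w', hw', -, rfl⟩ hne
    have hCC' : C' ≠ C := by
      rintro rfl
      rw [hCf] at hw hw'
      exact hne (by rw [Set.mem_singleton_iff.mp hw, Set.mem_singleton_iff.mp hw'])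
    exact pair_refines_iff.mpr ⟨C', ⟨hC', hCC'⟩, Set.pair_subset (hf C' hC') hw'⟩

theorem exists_subset_pair_of_refines_star {a b : Subpartition X} (hb : b ∈ P.star f)
    (hab : a.Refines b) {D : Set X} (hD : D ∈ a.blocks) :
    ∃ C ∈ P.blocks, D ⊆ C ∧ ∃ w, D ⊆ {f C, w} := by
  obtain ⟨C, hC, w, hw, -, rfl⟩ := hb
  obtain ⟨_, rfl, hDfw⟩ := hab D hD
  exact ⟨C, hC, hDfw.trans (Set.pair_subset (hf C hC) hw), w, hDfw⟩

end star

theorem exists_centre (P : Subpartition X) {C : Set X} {c : X} (hc : c ∈ C) :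
    ∃ f : Set X → X, (∀ D ∈ P.blocks, f D ∈ D) ∧ f C = c := by
  classical
  refine ⟨fun D => if D = C then c else if h : D.Nonempty then h.some else c, fun D hD => ?_,
    if_pos rfl⟩
  dsimp only
  split_ifs with hDC hDne
  · exact hDC ▸ hc
  · exact hDne.some_mem
  · exact absurd (P.nonempty_blocks D hD) hDne

theorem refines_split_of_refines_stars {P : Subpartition X} {f₁ f₂ : Set X → X}
    (hf₁ : ∀ C ∈ P.blocks, f₁ C ∈ C) (hf₂ : ∀ C ∈ P.blocks, f₂ C ∈ C)
    {B : Set X} (hB : B ∈ P.blocks) {z : X} (hz : z ∈ B) (hne : (B \ {z}).Nonempty)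
    (hf₁₂ : f₁ B ≠ f₂ B) (hz₁ : z ≠ f₁ B) (hz₂ : z ≠ f₂ B)
    {a b₁ b₂ : Subpartition X} (hb₁ : b₁ ∈ P.star f₁) (hb₂ : b₂ ∈ P.star f₂)
    (hab₁ : a.Refines b₁) (hab₂ : a.Refines b₂) : a.Refines (P.split hB hz hne) := by
  intro D hD
  obtain ⟨C, hC, hDC, w₁, hD₁⟩ := exists_subset_pair_of_refines_star hf₁ hb₁ hab₁ hD
  obtain ⟨C₂, hC₂, hDC₂, w₂, hD₂⟩ := exists_subset_pair_of_refines_star hf₂ hb₂ hab₂ hD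
  obtain ⟨v, hv⟩ := a.nonempty_blocks D hD
  obtain rfl : C₂ = C := eq_of_mem_of_mem hC₂ hC (hDC₂ hv) (hDC hv)
  by_cases hCB : C₂ = B
  · subst hCB
    by_cases hzD : z ∈ D
    · refine ⟨{z}, Set.mem_insert_of_mem _ (Set.mem_insert _ _), fun u hu => ?_⟩
      have := hD₁ hu; have := hD₂ hu; have := hD₁ hzD; have := hD₂ hzD
      grind
    · exact ⟨_, Set.mem_insert _ _, fun u hu => ⟨hDC hu, fun h => hzD (h ▸ hu)⟩⟩
  · exact ⟨C₂, mem_split_of_ne hB hz hne hC₂ hCB, hDC₂⟩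

end Subpartition

theorem subpartition_no_canonical_join_representation_general {X : Type*}
    (P : Subpartition X)
    (hB : ∃ B ∈ P.blocks, ∃ x y z : X,
      x ≠ y ∧ y ≠ z ∧ x ≠ z ∧ x ∈ B ∧ y ∈ B ∧ z ∈ B) :
    ¬ ∃ A : Set (Subpartition X), Subpartition.IrredundantRep A P ∧
        (∀ A' : Set (Subpartition X), Subpartition.IrredundantRep A' P →
          Subpartition.JoinRefines A A') ∧
        (∀ A' : Set (Subpartition X), Subpartition.IrredundantRep A' P →
          (∀ A'' : Set (Subpartition X), Subpartition.IrredundantRep A'' P →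
            Subpartition.JoinRefines A' A'') → A' = A) := by
  obtain ⟨B, hB, x, y, z, hxy, hyz, hxz, hx, hy, hz⟩ := hB
  rintro ⟨A, hA, hAmin, -⟩
  obtain ⟨f₁, hf₁, rfl⟩ := P.exists_centre hx
  obtain ⟨f₂, hf₂, rfl⟩ := P.exists_centre hy
  have hne : (B \ {z}).Nonempty := ⟨f₁ B, hx, hxz⟩
  refine P.not_refines_split hB hz hne (hA.2.1.2 _ fun a ha => ?_)
  obtain ⟨b₁, hb₁, hab₁⟩ := hAmin _ (Subpartition.irredundantRep_star hf₁) a ha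
  obtain ⟨b₂, hb₂, hab₂⟩ := hAmin _ (Subpartition.irredundantRep_star hf₂) a ha
  exact Subpartition.refines_split_of_refines_stars hf₁ hf₂ hB hz hne hxy hxz.symm hyz.symm
    hb₁ hb₂ hab₁ hab₂

/-- A nonzero subpartition of a finite set containing a block with at least three
elements has no canonical join representation: among its irredundant join
representations by join-irreducible elements, preordered by join-refinement,
there is no unique minimum. -/
theorem subpartition_no_canonical_join_representation {X : Type*} [Finite X]
    (P : Subpartition X) (hP : P ≠ Subpartition.empty X)
    (hB : ∃ B ∈ P.blocks, ∃ x y z : X,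
      x ≠ y ∧ y ≠ z ∧ x ≠ z ∧ x ∈ B ∧ y ∈ B ∧ z ∈ B) :
    ¬ ∃ A : Set (Subpartition X), Subpartition.IrredundantRep A P ∧
        (∀ A' : Set (Subpartition X), Subpartition.IrredundantRep A' P →
          Subpartition.JoinRefines A A') ∧
        (∀ A' : Set (Subpartition X), Subpartition.IrredundantRep A' P →
          (∀ A'' : Set (Subpartition X), Subpartition.IrredundantRep A'' P →
            Subpartition.JoinRefines A' A'') → A' = A) :=
  subpartition_no_canonical_join_representation_general P hB
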